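/- For every Θ ∈ G, the spectral norm of X_Θ satisfies ‖X_Θ‖_{2→2} = √(N_R·N_T). Consequently, (i) for every x ∈ ℂ^N, ‖V_x‖_F = ‖x‖₂, and (ii) for every s-sparse x ∈ ℂ^N, ‖V_x‖_{2→2} ≤ √(s/N_t)·‖x‖₂. -/

import Mathlib

open MeasureTheory ProbabilityTheory Complex
open scoped ENNReal Matrix

noncomputable section

namespace MIMO

/-- Squared ℓ²-norm of a complex vector. -/
def l2normSq {ι : Type*} [Fintype ι] (x : ι → ℂ) : ℝ := ∑ i, ‖x i‖ ^ 2

/-- ℓ²-norm of a complex vector. -/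
def l2norm {ι : Type*} [Fintype ι] (x : ι → ℂ) : ℝ := Real.sqrt (l2normSq x)

/-- ℓ¹-norm of a complex vector. -/
def l1norm {ι : Type*} [Fintype ι] (x : ι → ℂ) : ℝ := ∑ i, ‖x i‖

/-- Hermitian inner product, conjugate-linear in the first argument. -/
def cInner {ι : Type*} [Fintype ι] (x y : ι → ℂ) : ℂ := ∑ i, (starRingEnd ℂ) (x i) * y i

/-- Spectral norm (ℓ² → ℓ² operator norm) of a complex matrix. -/
def specNorm {m n : Type*} [Fintype m] [Fintype n] (A : Matrix m n ℂ) : ℝ :=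
  sSup ((fun x => l2norm (A.mulVec x)) '' {x | l2norm x ≤ 1})

/-- Frobenius norm of a complex matrix. -/
def frobNorm {m n : Type*} [Fintype m] [Fintype n] (A : Matrix m n ℂ) : ℝ :=
  Real.sqrt (∑ i, ∑ j, ‖A i j‖ ^ 2)

/-- The standard complex Gaussian measure on ℂ: real and imaginary parts are
independent real centered Gaussians of variance 1/2. -/
def stdCGaussian : Measure ℂ :=
  Measure.map (⇑Complex.measurableEquivRealProd.symm)
    ((gaussianReal 0 (1/2)).prod (gaussianReal 0 (1/2)))

/-- A mean-zero complex Gaussian measure of variance σ² on ℂ. -/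
def cGaussian (σ : ℝ) : Measure ℂ :=
  Measure.map (fun z : ℂ => (σ : ℂ) * z) stdCGaussian

/-- Complex Gaussian noise (independent entries, variance σ²). -/
def noiseMeasure (ι : Type*) [Fintype ι] (σ : ℝ) : Measure (ι → ℂ) :=
  Measure.pi (fun _ => cGaussian σ)

/-- The Steinhaus (uniform) distribution on the complex unit circle. -/
def steinhaus : Measure ℂ :=
  Measure.map (fun θ : ℝ => Complex.exp (θ * Complex.I))
    ((ENNReal.ofReal (2 * Real.pi))⁻¹ • volume.restrict (Set.Ico (0:ℝ) (2 * Real.pi)))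

/-- A Steinhaus vector: independent entries uniform on the complex unit circle. -/
def steinhausPi (ι : Type*) [Fintype ι] : Measure (ι → ℂ) := Measure.pi (fun _ => steinhaus)

/-- The joint distribution of the NT independent standard complex Gaussian signals in ℂ^{Nt}. -/
def signalMeasure (NT Nt : ℕ) : Measure (Fin NT → Fin Nt → ℂ) :=
  Measure.pi (fun _ => Measure.pi (fun _ => stdCGaussian))

/-- The angle–delay–Doppler parameter grid `[N_T N_R] × [N_t] × [N_t]`. -/
abbrev Grid (NT NR Nt : ℕ) := Fin (NT * NR) × Fin Nt × Fin Nt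

/-- `e^{2πi x}`. -/
def ePhase (x : ℝ) : ℂ := Complex.exp (((2 * Real.pi * x : ℝ) : ℂ) * Complex.I)

/-- The modulated circulant shift `M_f T_τ` applied to a signal:
`(M_f T_τ s)_k = e^{2πi f (k-1)/N_t} s_{k-τ}` (1-based indices; `k.val = k-1`). -/
def modShift (Nt : ℕ) [NeZero Nt] (τ f : ℕ) (s : Fin Nt → ℂ) (k : Fin Nt) : ℂ :=
  ePhase ((f : ℝ) * (k.1 : ℝ) / (Nt : ℝ)) * s (k - (Fin.ofNat Nt τ))

/-- The column `A_Θ` of the MIMO measurement matrix, `Θ = (β,τ,f)`;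
its `j`-th length-`N_t` block is
`e^{2πi β (j-1)/N_R} ∑_i e^{2πi β (i-1)/(N_T N_R)} M_f T_τ s_i`. -/
def colA (NT NR Nt : ℕ) [NeZero Nt] (sg : Fin NT → Fin Nt → ℂ)
    (Θ : Grid NT NR Nt) (p : Fin NR × Fin Nt) : ℂ :=
  ePhase (((Θ.1.1 : ℝ) + 1) * (p.1.1 : ℝ) / (NR : ℝ)) *
    ∑ i : Fin NT, ePhase (((Θ.1.1 : ℝ) + 1) * (i.1 : ℝ) / ((NT : ℝ) * (NR : ℝ))) *
      modShift Nt (Θ.2.1.1 + 1) (Θ.2.2.1 + 1) (sg i) p.2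

/-- The column `Ã_Θ = (N_T N_R N_t)^{-1/2} A_Θ` of the scaled measurement matrix. -/
def colAt (NT NR Nt : ℕ) [NeZero Nt] (sg : Fin NT → Fin Nt → ℂ)
    (Θ : Grid NT NR Nt) (p : Fin NR × Fin Nt) : ℂ :=
  ((Real.sqrt ((NT : ℝ) * (NR : ℝ) * (Nt : ℝ)) : ℂ))⁻¹ * colA NT NR Nt sg Θ p

/-- The MIMO measurement matrix `A`. -/
def Amat (NT NR Nt : ℕ) [NeZero Nt] (sg : Fin NT → Fin Nt → ℂ) :
    Matrix (Fin NR × Fin Nt) (Grid NT NR Nt) ℂ := fun p Θ => colA NT NR Nt sg Θ p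

/-- The scaled MIMO measurement matrix `Ã = (N_T N_R N_t)^{-1/2} A`. -/
def Atil (NT NR Nt : ℕ) [NeZero Nt] (sg : Fin NT → Fin Nt → ℂ) :
    Matrix (Fin NR × Fin Nt) (Grid NT NR Nt) ℂ := fun p Θ => colAt NT NR Nt sg Θ p

/-- The Gram matrix `Ã_T^* Ã_T` of the columns of `Ã` indexed by a subset `T`. -/
def gram (NT NR Nt : ℕ) [NeZero Nt] (sg : Fin NT → Fin Nt → ℂ)
    (T : Finset (Grid NT NR Nt)) : Matrix {Θ // Θ ∈ T} {Θ // Θ ∈ T} ℂ :=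
  fun Θ Θ' => cInner (colAt NT NR Nt sg Θ.1) (colAt NT NR Nt sg Θ'.1)

/-- `S_{[β]}`: the elements of `S` whose angle parameter is equivalent to `β`
(equivalent ⟺ difference divisible by `N_R`). -/
def classOf (NT NR Nt : ℕ) (S : Finset (Grid NT NR Nt)) (β : Fin (NT * NR)) :
    Finset (Grid NT NR Nt) :=
  S.filter (fun Θ => ((Θ.1.1 : ℤ) - (β.1 : ℤ)) % (NR : ℤ) = 0)

/-- A support set `S` is `η`-balanced if `|S_{[β]}| ≤ η |S| / N_R` for every angle class. -/
def IsBalanced (NT NR Nt : ℕ) (S : Finset (Grid NT NR Nt)) (η : ℝ) : Prop :=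
  ∀ β : Fin (NT * NR), ((classOf NT NR Nt S β).card : ℝ) ≤ η * (S.card : ℝ) / (NR : ℝ)

/-- The restricted isometry constant `δ_s(A)`: the smallest `δ ≥ 0` such that
`(1-δ)‖x‖₂² ≤ ‖Ax‖₂² ≤ (1+δ)‖x‖₂²` for all `s`-sparse `x`. -/
def ripConst {m n : Type*} [Fintype m] [Fintype n] (s : ℕ) (A : Matrix m n ℂ) : ℝ :=
  sInf {δ : ℝ | 0 ≤ δ ∧ ∀ x : n → ℂ, (Function.support x).ncard ≤ s →
    (1 - δ) * l2normSq x ≤ l2normSq (A.mulVec x) ∧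
      l2normSq (A.mulVec x) ≤ (1 + δ) * l2normSq x}


/-- The matrix `X_Θ`, whose `(i,j)`-th `N_t × N_t` block is
`e^{2πi β(i-1)/N_R} e^{2πi β(j-1)/(N_T N_R)} M_f T_τ`. -/
def Xmat (NT NR Nt : ℕ) [NeZero Nt] (Θ : Grid NT NR Nt) :
    Matrix (Fin NR × Fin Nt) (Fin NT × Fin Nt) ℂ :=
  fun p q =>
    ePhase (((Θ.1.1 : ℝ) + 1) * (p.1.1 : ℝ) / (NR : ℝ)) *
    ePhase (((Θ.1.1 : ℝ) + 1) * (q.1.1 : ℝ) / ((NT : ℝ) * (NR : ℝ))) *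
    (ePhase (((Θ.2.2.1 : ℝ) + 1) * (p.2.1 : ℝ) / (Nt : ℝ)) *
      (if q.2 = p.2 - (Fin.ofNat Nt (Θ.2.1.1 + 1 : ℕ)) then 1 else 0))

/-- The matrix `V_x = (N_T N_R N_t)^{-1/2} ∑_Θ x_Θ X_Θ`. -/
def Vx (NT NR Nt : ℕ) [NeZero Nt] (x : Grid NT NR Nt → ℂ) :
    Matrix (Fin NR × Fin Nt) (Fin NT × Fin Nt) ℂ :=
  ((Real.sqrt ((NT : ℝ) * (NR : ℝ) * (Nt : ℝ)) : ℂ))⁻¹ •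
    ∑ Θ : Grid NT NR Nt, x Θ • Xmat NT NR Nt Θ

/-!
Write `X_Θ = A_β ⊗ M_f T_τ`, where `A_β = a bᵀ` is the rank-one matrix of angle phases and
`M_f T_τ` is a permutation matrix with unimodular entries. Then `X_Θ v` is `a ⊗ M_f T_τ w` with
`w_l = ∑_j b_j v_{j,l}`, so Cauchy–Schwarz in `j` gives `‖X_Θ‖ ≤ √(N_R N_T)`, with equality at
`v = b̄ ⊗ e_1`.

Frobenius inner products of Kronecker products factor through traces,
`⟨X_Θ, X_Θ'⟩ = tr(A_βᴴ A_β') · tr((M_f T_τ)ᴴ M_f' T_τ')`, and both factors are full sums of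
roots of unity. For the angle factor this is because the two phases merge into
`e^{2πi (β' - β)(N_T i + j) / (N_T N_R)}` and `N_T i + j` runs over `[N_T N_R]`. Hence the
`X_Θ / √N` are orthonormal and `x ↦ V_x` is an isometry for the Frobenius norm. Finally, by the
triangle inequality `‖V_x‖ ≤ ‖x‖₁ / √N_t`, and `‖x‖₁ ≤ √s ‖x‖₂` for `s`-sparse `x`.
-/

open scoped Matrix.Norms.L2Operator Kronecker

section Norms

variable {ι : Type*} [Fintype ι]

lemma l2norm_eq_norm (x : ι → ℂ) : l2norm x = ‖WithLp.toLp 2 x‖ := by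
  simp [l2norm, l2normSq, EuclideanSpace.norm_eq]

variable {m n : Type*} [Fintype m] [Fintype n]

lemma specNorm_eq_l2_opNorm [DecidableEq n] (A : Matrix m n ℂ) : specNorm A = ‖A‖ := by
  rw [Matrix.l2_opNorm_def, ← ContinuousLinearMap.sSup_unitClosedBall_eq_norm, specNorm]
  congr 1
  ext r
  constructor
  · rintro ⟨x, hx, rfl⟩
    refine ⟨WithLp.toLp 2 x, by simpa [l2norm_eq_norm] using hx, ?_⟩
    simp [l2norm_eq_norm]
  · rintro ⟨y, hy, rfl⟩
    refine ⟨y.ofLp, by simpa [l2norm_eq_norm] using hy, ?_⟩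
    simp [l2norm_eq_norm]; rfl

lemma frobNorm_eq_norm (A : Matrix m n ℂ) :
    frobNorm A = ‖WithLp.toLp 2 (Function.uncurry A)‖ := by
  simp [frobNorm, EuclideanSpace.norm_eq, Fintype.sum_prod_type]; rfl

lemma inner_toLp_uncurry (A B : Matrix m n ℂ) :
    inner ℂ (WithLp.toLp 2 (Function.uncurry A)) (WithLp.toLp 2 (Function.uncurry B)) =
      (Aᴴ * B).trace := by
  simp [PiLp.inner_apply, Matrix.trace, Matrix.mul_apply, Fintype.sum_prod_type, mul_comm]
  exact Finset.sum_comm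

end Norms

lemma _root_.Orthonormal.norm_sum_smul {𝕜 ι E : Type*} [RCLike 𝕜] [Fintype ι]
    [NormedAddCommGroup E] [InnerProductSpace 𝕜 E] {v : ι → E} (hv : Orthonormal 𝕜 v) (c : ι → 𝕜) :
    ‖∑ i, c i • v i‖ = ‖WithLp.toLp 2 c‖ := by
  refine (sq_eq_sq₀ (norm_nonneg _) (norm_nonneg _)).1 ?_
  rw [@norm_sq_eq_re_inner 𝕜, hv.inner_sum, EuclideanSpace.norm_sq_eq]
  simp [RCLike.conj_mul]

section SpectralNorm

variable {m n : Type*} [Fintype m] [Fintype n] [DecidableEq n]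

lemma l2norm_mulVec_le_specNorm_mul (A : Matrix m n ℂ) (v : n → ℂ) :
    l2norm (A *ᵥ v) ≤ specNorm A * l2norm v := by
  rw [specNorm_eq_l2_opNorm, l2norm_eq_norm, l2norm_eq_norm]
  exact A.l2_opNorm_mulVec (WithLp.toLp 2 v)

lemma specNorm_le_of_forall_le (A : Matrix m n ℂ) {C : ℝ} (hC : 0 ≤ C)
    (h : ∀ v, l2norm (A *ᵥ v) ≤ C * l2norm v) : specNorm A ≤ C := by
  rw [specNorm_eq_l2_opNorm, Matrix.l2_opNorm_def]
  refine ContinuousLinearMap.opNorm_le_bound _ hC fun y => ?_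
  have := h y.ofLp
  simp only [l2norm_eq_norm, WithLp.toLp_ofLp] at this
  exact this

lemma specNorm_eq_sqrt_of_forall_le_of_eq (A : Matrix m n ℂ) {c : ℝ}
    (hle : ∀ v, l2normSq (A *ᵥ v) ≤ c * l2normSq v) {v₀ : n → ℂ} (hv₀ : v₀ ≠ 0)
    (heq : l2normSq (A *ᵥ v₀) = c * l2normSq v₀) : specNorm A = √c := by
  have hpos : 0 < l2norm v₀ := by
    rw [l2norm_eq_norm]; exact norm_pos_iff.2 (by simpa using hv₀)
  have hsq : 0 < l2normSq v₀ := by simpa [l2norm] using hpos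
  have hc : 0 ≤ c := by
    have : 0 ≤ l2normSq (A *ᵥ v₀) := Finset.sum_nonneg fun _ _ => by positivity
    nlinarith
  refine le_antisymm (specNorm_le_of_forall_le A (Real.sqrt_nonneg c) fun v => ?_) ?_
  · rw [l2norm, l2norm, ← Real.sqrt_mul hc]
    exact Real.sqrt_le_sqrt (hle v)
  · refine le_of_mul_le_mul_right ?_ hpos
    calc √c * l2norm v₀ = l2norm (A *ᵥ v₀) := by rw [l2norm, l2norm, heq, Real.sqrt_mul hc]
      _ ≤ specNorm A * l2norm v₀ := l2norm_mulVec_le_specNorm_mul A v₀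

end SpectralNorm

section Monomial

variable {m n o : Type*} [Fintype m] [Fintype n] [Fintype o] [DecidableEq o]

lemma norm_sum_mul_sq_le {ι : Type*} [Fintype ι] {b : ι → ℂ} (hb : ∀ j, ‖b j‖ = 1)
    (w : ι → ℂ) : ‖∑ j, b j * w j‖ ^ 2 ≤ Fintype.card ι * ∑ j, ‖w j‖ ^ 2 := by
  calc ‖∑ j, b j * w j‖ ^ 2 ≤ (∑ j, ‖w j‖) ^ 2 := by
        gcongr
        exact (norm_sum_le _ _).trans_eq (by simp [hb])
    _ ≤ Fintype.card ι * ∑ j, ‖w j‖ ^ 2 := sq_sum_le_card_mul_sum_sq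

lemma l2normSq_kronecker_monomial_mulVec {a : m → ℂ} (ha : ∀ i, ‖a i‖ = 1) (b : n → ℂ)
    {c : o → ℂ} (hc : ∀ k, ‖c k‖ = 1) (σ : o ≃ o) (v : n × o → ℂ) :
    l2normSq
        ((Matrix.vecMulVec a b ⊗ₖ Matrix.of fun k l => c k * if l = σ k then 1 else 0) *ᵥ v) =
      Fintype.card m * ∑ l, ‖∑ j, b j * v (j, l)‖ ^ 2 := by
  have happly : ∀ i k,
      ((Matrix.vecMulVec a b ⊗ₖ Matrix.of fun k l => c k * if l = σ k then 1 else 0) *ᵥ v) (i, k) =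
        a i * c k * ∑ j, b j * v (j, σ k) := by
    intro i k
    simp only [Matrix.mulVec, dotProduct, Fintype.sum_prod_type, Matrix.kroneckerMap_apply,
      Matrix.vecMulVec_apply, Matrix.of_apply, mul_ite, mul_one, mul_zero, ite_mul, zero_mul,
      Finset.sum_ite_eq', Finset.mem_univ, if_true, Finset.mul_sum]
    exact Finset.sum_congr rfl fun j _ => by ring
  simp only [l2normSq, Fintype.sum_prod_type, happly, norm_mul, ha, hc, one_mul,
    Finset.sum_const, Finset.card_univ, nsmul_eq_mul]
  rw [Equiv.sum_comp σ fun l => ‖∑ j, b j * v (j, l)‖ ^ 2]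

lemma specNorm_kronecker_monomial [Nonempty n] [Nonempty o] {a : m → ℂ} (ha : ∀ i, ‖a i‖ = 1)
    {b : n → ℂ} (hb : ∀ j, ‖b j‖ = 1) {c : o → ℂ} (hc : ∀ k, ‖c k‖ = 1) (σ : o ≃ o) :
    specNorm (Matrix.vecMulVec a b ⊗ₖ Matrix.of fun k l => c k * if l = σ k then 1 else 0) =
      √(Fintype.card m * Fintype.card n) := by
  classical
  obtain ⟨l₀⟩ := ‹Nonempty o›
  obtain ⟨j₀⟩ := ‹Nonempty n›
  refine specNorm_eq_sqrt_of_forall_le_of_eq _ (fun v => ?_)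
    (v₀ := fun q => if q.2 = l₀ then starRingEnd ℂ (b q.1) else 0) ?_ ?_
  · rw [l2normSq_kronecker_monomial_mulVec ha b hc, l2normSq, Fintype.sum_prod_type,
      Finset.sum_comm, mul_assoc, Finset.mul_sum (s := Finset.univ) (a := (Fintype.card n : ℝ))]
    gcongr with l
    exact norm_sum_mul_sq_le hb _
  · exact Function.ne_iff.2 ⟨(j₀, l₀), by simp [← norm_pos_iff, hb]⟩
  · rw [l2normSq_kronecker_monomial_mulVec ha b hc, l2normSq, Fintype.sum_prod_type]
    simp [apply_ite (fun z : ℂ => ‖z‖ ^ 2), hb, mul_ite, Complex.mul_conj,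
      Complex.normSq_eq_norm_sq]
    ring

end Monomial

lemma ePhase_eq_fourierChar (x : ℝ) : ePhase x = Real.fourierChar x := rfl

lemma ePhase_add (x y : ℝ) : ePhase (x + y) = ePhase x * ePhase y := by
  simp [ePhase_eq_fourierChar, AddChar.map_add_eq_mul]

lemma norm_ePhase (x : ℝ) : ‖ePhase x‖ = 1 := Circle.norm_coe (Real.fourierChar x)

lemma conj_ePhase (x : ℝ) : starRingEnd ℂ (ePhase x) = ePhase (-x) := by
  simp [ePhase_eq_fourierChar, AddChar.map_neg_eq_inv]

lemma ePhase_pow (x : ℝ) (m : ℕ) : ePhase x ^ m = ePhase (m * x) := by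
  rw [← nsmul_eq_mul, ePhase_eq_fourierChar, ePhase_eq_fourierChar, AddChar.map_nsmul_eq_pow]
  simp

lemma ePhase_intCast (k : ℤ) : ePhase k = 1 := by
  simpa [ePhase, mul_comm, mul_assoc, mul_left_comm] using Complex.exp_int_mul_two_pi_mul_I k

lemma ePhase_eq_one_iff (x : ℝ) : ePhase x = 1 ↔ ∃ k : ℤ, x = k := by
  simp only [ePhase, Complex.exp_eq_one_iff]
  refine exists_congr fun k => ⟨fun h => ?_, fun h => by rw [h]; push_cast; ring⟩
  have := congrArg Complex.im h
  simp at this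
  nlinarith [Real.pi_pos]

lemma sum_ePhase_intCast_mul_div (n : ℕ) [NeZero n] {a : ℤ} (ha : |a| < n) :
    ∑ k : Fin n, ePhase (a * k / n) = if a = 0 then (n : ℂ) else 0 := by
  have hn : (n : ℝ) ≠ 0 := NeZero.ne _
  split_ifs with h0
  · simp [h0, ePhase]
  have hζ : ePhase (a / n) ≠ 1 := by
    rw [Ne, ePhase_eq_one_iff]
    rintro ⟨k, hk⟩
    have hak : a = n * k := by
      rw [div_eq_iff hn] at hk; exact_mod_cast (hk.trans (mul_comm _ _))
    rw [hak, abs_mul, Nat.abs_cast] at ha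
    have hk0 : k ≠ 0 := by rintro rfl; exact h0 (by simpa using hak)
    nlinarith [Int.one_le_abs hk0]
  rw [Fin.sum_univ_eq_sum_range (fun k => ePhase (a * k / n)), Finset.sum_congr rfl
    fun (k : ℕ) _ => (show ePhase (a * k / n) = ePhase (a / n) ^ k by rw [ePhase_pow]; ring_nf),
    geom_sum_eq hζ, ePhase_pow, mul_div_cancel₀ _ hn, ePhase_intCast, sub_self, zero_div]

lemma conj_ePhase_mul_ePhase (x y : ℝ) :
    starRingEnd ℂ (ePhase x) * ePhase y = ePhase (y - x) := by
  rw [conj_ePhase, ← ePhase_add, neg_add_eq_sub]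

lemma _root_.Fin.ofNat_val_add_one {n : ℕ} [NeZero n] (τ : Fin n) :
    Fin.ofNat n (τ + 1) = τ + 1 := by
  ext; simp [Fin.val_add]

def angleMat (NT NR : ℕ) (β : Fin (NT * NR)) : Matrix (Fin NR) (Fin NT) ℂ :=
  Matrix.vecMulVec (fun i => ePhase (((β : ℝ) + 1) * i / NR))
    (fun j => ePhase (((β : ℝ) + 1) * j / ((NT : ℝ) * NR)))

/-- `M_f T_τ`; as in `Xmat`, the `+ 1`s pass from `Fin` to the paper's 1-based `τ, f`. -/
def modShiftMat (Nt : ℕ) [NeZero Nt] (τ f : Fin Nt) : Matrix (Fin Nt) (Fin Nt) ℂ :=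
  fun k l => ePhase (((f : ℝ) + 1) * k / Nt) * if l = k - Fin.ofNat Nt (τ + 1) then 1 else 0

lemma Xmat_eq_kronecker {NT NR Nt : ℕ} [NeZero Nt] (Θ : Grid NT NR Nt) :
    Xmat NT NR Nt Θ = angleMat NT NR Θ.1 ⊗ₖ modShiftMat Nt Θ.2.1 Θ.2.2 := rfl

section Orthogonality

variable {NT NR Nt : ℕ} [NeZero NT] [NeZero NR] [NeZero Nt]

lemma trace_conjTranspose_angleMat_mul (β β' : Fin (NT * NR)) :
    ((angleMat NT NR β)ᴴ * angleMat NT NR β').trace = if β = β' then (NT * NR : ℂ) else 0 := by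
  have hphase : ∀ (i : Fin NR) (j : Fin NT), starRingEnd ℂ (angleMat NT NR β i j) *
      angleMat NT NR β' i j =
        ePhase (((β' : ℤ) - β : ℤ) * (finProdFinEquiv (i, j) : ℕ) / ((NR * NT : ℕ) : ℝ)) := by
    intro i j
    have hNT : (NT : ℝ) ≠ 0 := NeZero.ne _
    have hNR : (NR : ℝ) ≠ 0 := NeZero.ne _
    simp only [angleMat, Matrix.vecMulVec_apply, conj_ePhase, ← ePhase_add]
    congr 1
    simp only [finProdFinEquiv_apply_val]
    push_cast
    field_simp
    ring
  have hΔ : |((β' : ℤ) - β : ℤ)| < (NR * NT : ℕ) := by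
    rw [abs_lt]; push_cast; constructor <;> nlinarith [β.2, β'.2]
  simp only [Matrix.trace, Matrix.diag, Matrix.mul_apply, Matrix.conjTranspose_apply,
    RCLike.star_def, hphase]
  rw [Finset.sum_comm, ← Fintype.sum_prod_type', Equiv.sum_comp finProdFinEquiv
    (fun m => ePhase (((β' : ℤ) - β : ℤ) * (m : ℕ) / ((NR * NT : ℕ) : ℝ))),
    sum_ePhase_intCast_mul_div _ hΔ]
  simp only [sub_eq_zero, Nat.cast_inj, Fin.val_inj, eq_comm (a := β')]
  push_cast
  ring_nf

lemma trace_conjTranspose_modShiftMat_mul (τ f τ' f' : Fin Nt) :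
    ((modShiftMat Nt τ f)ᴴ * modShiftMat Nt τ' f').trace =
      if τ = τ' ∧ f = f' then (Nt : ℂ) else 0 := by
  have hΔ : |((f' : ℤ) - f : ℤ)| < Nt := by
    rw [abs_lt]; constructor <;> omega
  simp only [Matrix.trace, Matrix.diag, Matrix.mul_apply, Matrix.conjTranspose_apply,
    RCLike.star_def, modShiftMat, Fin.ofNat_val_add_one, map_mul]
  rw [Finset.sum_comm]
  simp only [MonoidWithZeroHom.map_ite_one_zero, mul_ite, mul_one, mul_zero, ite_mul, zero_mul,
    Finset.sum_ite_eq', Finset.mem_univ, ↓reduceIte, sub_right_inj, add_left_inj,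
    Finset.sum_ite_irrel, Finset.sum_const_zero, ite_and, conj_ePhase_mul_ePhase]
  rcases eq_or_ne τ' τ with rfl | hτ
  · have hphase : ∀ k : Fin Nt, ePhase (((f' : ℝ) + 1) * k / Nt - ((f : ℝ) + 1) * k / Nt) =
        ePhase (((f' : ℤ) - f : ℤ) * k / Nt) := fun k => by push_cast; ring_nf
    simp only [if_true, hphase, sum_ePhase_intCast_mul_div Nt hΔ, sub_eq_zero, Nat.cast_inj,
      Fin.val_inj, eq_comm]
  · simp [hτ, hτ.symm]

lemma trace_conjTranspose_Xmat_mul (Θ Θ' : Grid NT NR Nt) :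
    ((Xmat NT NR Nt Θ)ᴴ * Xmat NT NR Nt Θ').trace =
      if Θ = Θ' then (NT * NR * Nt : ℂ) else 0 := by
  rw [Xmat_eq_kronecker, Xmat_eq_kronecker, Matrix.conjTranspose_kronecker,
    ← Matrix.mul_kronecker_mul, Matrix.trace_kronecker, trace_conjTranspose_angleMat_mul,
    trace_conjTranspose_modShiftMat_mul]
  simp only [Prod.ext_iff]
  split_ifs <;> simp_all

lemma orthonormal_Xmat :
    Orthonormal ℂ fun Θ : Grid NT NR Nt =>
      ((√((NT : ℝ) * NR * Nt) : ℂ))⁻¹ • WithLp.toLp 2 (Function.uncurry (Xmat NT NR Nt Θ)) := by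
  rw [orthonormal_iff_ite]
  intro Θ Θ'
  rw [inner_smul_left, inner_smul_right, inner_toLp_uncurry, trace_conjTranspose_Xmat_mul]
  split_ifs
  · have h : (NT : ℝ) * NR * Nt ≠ 0 := by simp [NeZero.ne]
    rw [← Complex.ofReal_inv, Complex.conj_ofReal, ← mul_assoc, ← Complex.ofReal_mul,
      ← mul_inv, Real.mul_self_sqrt (by positivity)]
    push_cast
    exact inv_mul_cancel₀ (by exact_mod_cast h)
  · simp

lemma frobNorm_Vx (x : Grid NT NR Nt → ℂ) : frobNorm (Vx NT NR Nt x) = l2norm x := by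
  have hflat : WithLp.toLp 2 (Function.uncurry (Vx NT NR Nt x)) = ∑ Θ, x Θ •
      (((√((NT : ℝ) * NR * Nt) : ℂ))⁻¹ • WithLp.toLp 2 (Function.uncurry (Xmat NT NR Nt Θ))) := by
    ext ⟨p, q⟩
    simp [Vx, Function.uncurry, Matrix.sum_apply, Finset.mul_sum, mul_left_comm]
  rw [frobNorm_eq_norm, hflat, orthonormal_Xmat.norm_sum_smul, l2norm_eq_norm]

end Orthogonality

lemma l1norm_le_sqrt_mul_l2norm {ι : Type*} [Fintype ι] (x : ι → ℂ) {s : ℕ}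
    (hs : (Function.support x).ncard ≤ s) : l1norm x ≤ √s * l2norm x := by
  classical
  set T := Finset.univ.filter fun i => x i ≠ 0
  have hT : (T.card : ℝ) ≤ s := by
    have : T.card = (Function.support x).ncard := by
      rw [Set.ncard_eq_toFinset_card']; congr; ext; simp [T]
    exact_mod_cast this ▸ hs
  have hl1 : l1norm x = ∑ i ∈ T, ‖x i‖ := by
    rw [l1norm, Finset.sum_filter_of_ne fun i _ h => by simpa using h]
  rw [hl1, l2norm, ← Real.sqrt_mul (Nat.cast_nonneg s)]
  refine Real.le_sqrt_of_sq_le ?_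
  calc (∑ i ∈ T, ‖x i‖) ^ 2 ≤ T.card * ∑ i ∈ T, ‖x i‖ ^ 2 := sq_sum_le_card_mul_sum_sq
    _ ≤ s * l2normSq x := by
      gcongr
      exact Finset.sum_le_sum_of_subset_of_nonneg (Finset.subset_univ T) fun _ _ _ => by positivity

lemma specNorm_Xmat {NT NR Nt : ℕ} [NeZero NT] [NeZero Nt] (Θ : Grid NT NR Nt) :
    specNorm (Xmat NT NR Nt Θ) = √((NR : ℝ) * NT) := by
  rw [Xmat_eq_kronecker]
  exact (specNorm_kronecker_monomial (fun _ => norm_ePhase _) (fun _ => norm_ePhase _)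
    (fun _ => norm_ePhase _) (Equiv.subRight (Fin.ofNat Nt (Θ.2.1 + 1)))).trans (by simp)

lemma specNorm_Vx_le {NT NR Nt : ℕ} [NeZero NT] [NeZero NR] [NeZero Nt] (x : Grid NT NR Nt → ℂ)
    {s : ℕ} (hs : (Function.support x).ncard ≤ s) :
    specNorm (Vx NT NR Nt x) ≤ √((s : ℝ) / Nt) * l2norm x := by
  have hN : (0 : ℝ) < NR * NT :=
    mul_pos (Nat.cast_pos.2 (NeZero.pos NR)) (Nat.cast_pos.2 (NeZero.pos NT))
  calc specNorm (Vx NT NR Nt x)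
      ≤ (√((NT : ℝ) * NR * Nt))⁻¹ * ∑ Θ, ‖x Θ‖ * √((NR : ℝ) * NT) := by
        rw [specNorm_eq_l2_opNorm, Vx, norm_smul, norm_inv, Complex.norm_real, Real.norm_of_nonneg
          (Real.sqrt_nonneg _)]
        gcongr
        refine (norm_sum_le _ _).trans (Finset.sum_le_sum fun Θ _ => ?_)
        rw [norm_smul, ← specNorm_eq_l2_opNorm, specNorm_Xmat]
    _ = (√(Nt : ℝ))⁻¹ * l1norm x := by
        rw [← Finset.sum_mul, l1norm, show (NT : ℝ) * NR * Nt = NR * NT * Nt by ring,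
          Real.sqrt_mul hN.le]
        field_simp
    _ ≤ (√(Nt : ℝ))⁻¹ * (√s * l2norm x) := by gcongr; exact l1norm_le_sqrt_mul_l2norm x hs
    _ = √((s : ℝ) / Nt) * l2norm x := by rw [Real.sqrt_div' _ (Nat.cast_nonneg _)]; ring

/-- norms of `X_Θ` and `V_x`: spectral norm of `X_Θ`, Frobenius norm of
`V_x`, and the spectral-norm bound for sparse `x`. -/
theorem stmt15 (NT NR Nt : ℕ) [NeZero NT] [NeZero NR] [NeZero Nt] :
    (∀ Θ : Grid NT NR Nt, specNorm (Xmat NT NR Nt Θ) = Real.sqrt ((NR : ℝ) * (NT : ℝ))) ∧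
    (∀ x : Grid NT NR Nt → ℂ, frobNorm (Vx NT NR Nt x) = l2norm x) ∧
    (∀ (s : ℕ) (x : Grid NT NR Nt → ℂ), (Function.support x).ncard ≤ s →
      specNorm (Vx NT NR Nt x) ≤ Real.sqrt ((s : ℝ) / (Nt : ℝ)) * l2norm x) :=
  ⟨specNorm_Xmat, frobNorm_Vx, fun _ x hx => specNorm_Vx_le x hx⟩

end MIMO
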